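/- arXiv:2207.14703 — 4 statements merged into one kernel-verified Lean document; each statement's English description precedes it below -/
import Mathlib

section
/- Two subsets S, S' ⊆ ℕ are equivalent under the smallest equivalence relation identifying S with S/r for all r ∈ ℕ if and only if there exist r, r' ∈ ℕ with S/r = S'/r'. -/
/-- `S/r`: the image of `S ⊆ ℕ` under truncated division `n ↦ n / gcd(r,n)`. -/
def truncDiv (S : Set ℕ) (r : ℕ) : Set ℕ := (fun n => n / Nat.gcd r n) '' S

/-- The generating relation: `S` is related to `S/r` for each positive `r`. -/
def truncStep (S T : Set ℕ) : Prop := ∃ r : ℕ, 0 < r ∧ T = truncDiv S r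

lemma gcd_mul_eq (r s n : ℕ) :
    Nat.gcd (r * s) n = Nat.gcd r n * Nat.gcd s (n / Nat.gcd r n) := by
  rcases Nat.eq_zero_or_pos (Nat.gcd r n) with h | h
  · obtain ⟨hr, hn⟩ := Nat.gcd_eq_zero_iff.mp h
    subst hr hn; simp
  · obtain ⟨r', hr'⟩ := Nat.gcd_dvd_left r n
    obtain ⟨m, hm⟩ := Nat.gcd_dvd_right r n
    set d := Nat.gcd r n with hd
    have e1 : r / d = r' := by rw [hr', Nat.mul_div_cancel_left _ h]
    have e2 : n / d = m := by rw [hm, Nat.mul_div_cancel_left _ h]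
    have hcop : Nat.Coprime r' m := by
      have h' := Nat.coprime_div_gcd_div_gcd (m := r) (n := n) h
      rw [← hd, e1, e2] at h'
      exact h'
    rw [e2, hr', hm, mul_assoc, Nat.gcd_mul_left, hcop.gcd_mul_left_cancel]

lemma truncDiv_truncDiv (S : Set ℕ) (r s : ℕ) :
    truncDiv (truncDiv S r) s = truncDiv S (r * s) := by
  unfold truncDiv
  rw [Set.image_image]
  exact Set.image_congr fun n _ => by
    rw [Nat.div_div_eq_div_mul, gcd_mul_eq]

lemma truncDiv_one (S : Set ℕ) : truncDiv S 1 = S := by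
  simp [truncDiv, Nat.gcd_one_left]

/-- Two subsets of ℕ are equivalent under the smallest equivalence relation
identifying `S` with `S/r` for all `r` iff there exist `r, r'` with
`S/r = S'/r'`. -/
theorem eqvGen_truncStep_iff (S S' : Set ℕ) :
    Relation.EqvGen truncStep S S' ↔
      ∃ r r' : ℕ, 0 < r ∧ 0 < r' ∧ truncDiv S r = truncDiv S' r' := by
  constructor
  · intro h
    induction h with
    | rel A B h =>
      obtain ⟨r, hr, rfl⟩ := h
      exact ⟨r, 1, hr, one_pos, by rw [truncDiv_one]⟩
    | refl A => exact ⟨1, 1, one_pos, one_pos, rfl⟩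
    | symm A B _ ih =>
      obtain ⟨r, r', hr, hr', h⟩ := ih
      exact ⟨r', r, hr', hr, h.symm⟩
    | trans A B C _ _ ih1 ih2 =>
      obtain ⟨r, s, hr, hs, h1⟩ := ih1
      obtain ⟨s', t, hs', ht, h2⟩ := ih2
      refine ⟨r * s', t * s, Nat.mul_pos hr hs', Nat.mul_pos ht hs, ?_⟩
      rw [← truncDiv_truncDiv, h1, truncDiv_truncDiv, mul_comm s s',
        ← truncDiv_truncDiv, h2, truncDiv_truncDiv]
  · rintro ⟨r, r', hr, hr', h⟩
    exact Relation.EqvGen.trans _ _ _ (Relation.EqvGen.rel _ _ ⟨r, hr, rfl⟩)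
      (h ▸ Relation.EqvGen.symm _ _ (Relation.EqvGen.rel _ _ ⟨r', hr', rfl⟩))
end

section
/- Let x generate an infinite cyclic group, let d, r be positive integers, and let y be another element with ⟨x⟩ ∩ ⟨y⟩ = ⟨x^d⟩ = ⟨y^d⟩. Then ⟨x^r⟩ ∩ ⟨y^r⟩ = ⟨x^{rd/gcd(r,d)}⟩, so the index of ⟨x^r⟩ ∩ ⟨y^r⟩ in ⟨x^r⟩ equals d / gcd(r,d). -/
/-!
As `x` has infinite order, `n ↦ x ^ n` identifies `⟨x⟩` with `ℤ`, where
`⟨x^a⟩ ∩ ⟨x^b⟩ = ⟨x^lcm(a,b)⟩` and `⟨x^m⟩` has index `m`. With `L = lcm(r,d)`, an element of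
`⟨x^r⟩ ∩ ⟨y^r⟩` lies in `⟨x⟩ ∩ ⟨y⟩ = ⟨x^d⟩`, hence in `⟨x^r⟩ ∩ ⟨x^d⟩ = ⟨x^L⟩`. Conversely
`⟨x^d⟩ = ⟨y^d⟩` gives `⟨x^L⟩ = ⟨y^L⟩ ≤ ⟨y^r⟩`. So the intersection is `⟨(x^r)^(L/r)⟩`, of
index `L/r = d/gcd(r,d)` in `⟨x^r⟩`.
-/

theorem injective_zpowersHom {G : Type*} [Group G] {x : G} (hx : ¬IsOfFinOrder x) :
    Function.Injective (zpowersHom G x) :=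
  injective_zpow_iff_not_isOfFinOrder.2 hx

namespace Subgroup

variable {G : Type*} [Group G]

theorem pow_mem_zpowers_pow_of_dvd (g : G) {m n : ℕ} (h : m ∣ n) :
    g ^ n ∈ zpowers (g ^ m) := by
  obtain ⟨k, rfl⟩ := h
  rw [pow_mul]
  exact npow_mem_zpowers _ k

theorem zpowers_pow_le_zpowers_pow_of_mem {a b : G} (h : a ∈ zpowers b) (n : ℕ) :
    zpowers (a ^ n) ≤ zpowers (b ^ n) := by
  obtain ⟨k, rfl⟩ := h
  rw [← zpow_natCast, ← zpow_natCast, ← zpow_mul, mul_comm, zpow_mul]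
  exact zpowers_le_of_mem (zpow_mem_zpowers _ k)

theorem zpowers_pow_eq_zpowers_pow {a b : G} (h : zpowers a = zpowers b) (n : ℕ) :
    zpowers (a ^ n) = zpowers (b ^ n) :=
  le_antisymm (zpowers_pow_le_zpowers_pow_of_mem (h ▸ mem_zpowers a) n)
    (zpowers_pow_le_zpowers_pow_of_mem (h ▸ mem_zpowers b) n)

theorem zpowers_zpow_eq_map_zmultiples (x : G) (n : ℤ) :
    zpowers (x ^ n) = (AddSubgroup.zmultiples n).toSubgroup.map (zpowersHom G x) := by
  ext z
  simp [mem_zpowers_iff, AddSubgroup.mem_zmultiples_iff, ← zpow_mul, mul_comm]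

theorem zpowers_pow_inf_zpowers_pow {x : G} (hx : ¬IsOfFinOrder x) (a b : ℕ) :
    zpowers (x ^ a) ⊓ zpowers (x ^ b) = zpowers (x ^ a.lcm b) := by
  simp only [← zpow_natCast, zpowers_zpow_eq_map_zmultiples,
    ← map_inf_eq _ _ _ (injective_zpowersHom hx), ← OrderIso.map_inf,
    Int.zmultiples_inf, Int.lcm_natCast_natCast]

theorem relIndex_zpowers_pow {x : G} (hx : ¬IsOfFinOrder x) (m : ℕ) :
    (zpowers (x ^ m)).relIndex (zpowers x) = m := by
  rw [← zpow_natCast, zpowers_zpow_eq_map_zmultiples, ← range_zpowersHom,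
    MonoidHom.range_eq_map, relIndex_map_map_of_injective _ _ (injective_zpowersHom hx),
    relIndex_top_right, AddSubgroup.index_toSubgroup, Int.index_zmultiples, Int.natAbs_natCast]

end Subgroup

open Subgroup

theorem zpowers_pow_inter_general {G : Type*} [Group G] (x y : G) (hx : ¬ IsOfFinOrder x)
    (d r : ℕ) (hr : 0 < r)
    (h1 : Subgroup.zpowers x ⊓ Subgroup.zpowers y = Subgroup.zpowers (x ^ d))
    (h2 : Subgroup.zpowers x ⊓ Subgroup.zpowers y = Subgroup.zpowers (y ^ d)) :
    Subgroup.zpowers (x ^ r) ⊓ Subgroup.zpowers (y ^ r)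
        = Subgroup.zpowers (x ^ (r * d / Nat.gcd r d)) ∧
      (Subgroup.zpowers (y ^ r)).relIndex (Subgroup.zpowers (x ^ r))
        = d / Nat.gcd r d := by
  have hxy_lcm : zpowers (x ^ r.lcm d) = zpowers (y ^ r.lcm d) := by
    obtain ⟨k, hk⟩ := Nat.dvd_lcm_right r d
    rw [hk, pow_mul, pow_mul]
    exact zpowers_pow_eq_zpowers_pow (h1.symm.trans h2) k
  have hinter : zpowers (x ^ r) ⊓ zpowers (y ^ r) = zpowers (x ^ r.lcm d) := by
    refine le_antisymm ?_ <| le_inf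
      (zpowers_le_of_mem (pow_mem_zpowers_pow_of_dvd x (Nat.dvd_lcm_left r d)))
      (hxy_lcm.trans_le (zpowers_le_of_mem (pow_mem_zpowers_pow_of_dvd y (Nat.dvd_lcm_left r d))))
    calc zpowers (x ^ r) ⊓ zpowers (y ^ r)
        ≤ zpowers (x ^ r) ⊓ (zpowers x ⊓ zpowers y) :=
          le_inf inf_le_left (inf_le_inf (zpowers_le_of_mem (npow_mem_zpowers x r))
            (zpowers_le_of_mem (npow_mem_zpowers y r)))
      _ = zpowers (x ^ r.lcm d) := by rw [h1, zpowers_pow_inf_zpowers_pow hx]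
  refine ⟨hinter, ?_⟩
  have hxr : ¬IsOfFinOrder (x ^ r) := by simp [isOfFinOrder_pow, hx, hr.ne']
  have hlcm : r.lcm d = r * (d / r.gcd d) := Nat.mul_div_assoc r (Nat.gcd_dvd_right r d)
  rw [← inf_relIndex_right, inf_comm, hinter, hlcm, pow_mul, relIndex_zpowers_pow hxr]

/-- If `x` has infinite order, `d, r > 0`, and `⟨x⟩ ∩ ⟨y⟩ = ⟨x^d⟩ = ⟨y^d⟩`, then
`⟨x^r⟩ ∩ ⟨y^r⟩ = ⟨x^{rd/gcd(r,d)}⟩`, and the index of `⟨x^r⟩ ∩ ⟨y^r⟩` in `⟨x^r⟩`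
equals `d / gcd(r,d)`. -/
theorem zpowers_pow_inter {G : Type*} [Group G] (x y : G) (hx : ¬ IsOfFinOrder x)
    (d r : ℕ) (hd : 0 < d) (hr : 0 < r)
    (h1 : Subgroup.zpowers x ⊓ Subgroup.zpowers y = Subgroup.zpowers (x ^ d))
    (h2 : Subgroup.zpowers x ⊓ Subgroup.zpowers y = Subgroup.zpowers (y ^ d)) :
    Subgroup.zpowers (x ^ r) ⊓ Subgroup.zpowers (y ^ r)
        = Subgroup.zpowers (x ^ (r * d / Nat.gcd r d)) ∧
      (Subgroup.zpowers (y ^ r)).relIndex (Subgroup.zpowers (x ^ r))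
        = d / Nat.gcd r d :=
  zpowers_pow_inter_general x y hx d r hr h1 h2
end

section
/- Let n > 1 and p be integers with p a nontrivial divisor of n, p ≠ n. The set E = { n^{2i} : i ≥ 0 } ∪ { n^{2i+1} : i ≥ 0 } ∪ { n^{2i+1} p : i ≥ 0 }, listed in increasing order, has successive ratios eventually periodic with period (n, p, n/p), provided 1 < p < n. -/
/-- For `1 < p < n` with `p ∣ n`, the increasing enumeration of
`E = {n^{2i}} ∪ {n^{2i+1}} ∪ {n^{2i+1}·p}` eventually has successive ratios
`3`-periodic with values `n, p, n/p` (up to cyclic shift). -/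
theorem ratios_eventually_three_periodic (n p : ℕ) (hn : 1 < n) (hp : 1 < p)
    (hpn : p < n) (hdvd : p ∣ n) (e : ℕ → ℕ) (he : StrictMono e)
    (hrange : Set.range e = {m | ∃ i : ℕ, m = n ^ (2 * i)}
      ∪ {m | ∃ i : ℕ, m = n ^ (2 * i + 1)}
      ∪ {m | ∃ i : ℕ, m = n ^ (2 * i + 1) * p}) :
    ∃ j0 : ℕ, ∀ j ≥ j0, (e j ∣ e (j + 1)) ∧
      (e (j + 1) / e j, e (j + 2) / e (j + 1), e (j + 3) / e (j + 2)) ∈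
        ({(n, p, n / p), (p, n / p, n), (n / p, n, p)} : Set (ℕ × ℕ × ℕ)) := by
  obtain ⟨m, hm⟩ := hdvd
  have hnpos : 0 < n := by omega
  have hppos : 0 < p := by omega
  set f : ℕ → ℕ := fun j => n ^ (2 * (j / 3)) * (if j % 3 = 0 then 1 else if j % 3 = 1 then n else n * p) with hf
  have hf0 : ∀ q, f (3 * q) = n ^ (2 * q) := by
    intro q; simp [hf, Nat.mul_div_cancel_left, Nat.mul_mod_right]
  have hf1 : ∀ q, f (3 * q + 1) = n ^ (2 * q + 1) := by
    intro q
    have h1 : (3 * q + 1) / 3 = q := by omega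
    have h2 : (3 * q + 1) % 3 = 1 := by omega
    simp [hf, h1, h2, pow_succ]
  have hf2 : ∀ q, f (3 * q + 2) = n ^ (2 * q + 1) * p := by
    intro q
    have h1 : (3 * q + 2) / 3 = q := by omega
    have h2 : (3 * q + 2) % 3 = 2 := by omega
    simp [hf, h1, h2, pow_succ, mul_assoc]
  have hfmono : StrictMono f := by
    apply strictMono_nat_of_lt_succ
    intro j
    obtain ⟨q, r, hr, rfl⟩ : ∃ q r, r < 3 ∧ j = 3 * q + r :=
      ⟨j / 3, j % 3, Nat.mod_lt _ (by norm_num), (Nat.div_add_mod j 3).symm⟩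
    interval_cases r
    · rw [Nat.add_zero, hf0, show 3 * q + 1 = 3 * q + 1 from rfl, hf1]
      exact pow_lt_pow_right₀ hn (by omega)
    · rw [show 3 * q + 1 + 1 = 3 * q + 2 from by ring, hf1, hf2]
      exact lt_mul_of_one_lt_right (pow_pos hnpos _) hp
    · rw [show 3 * q + 2 + 1 = 3 * (q + 1) from by ring, hf2, hf0,
        show n ^ (2 * (q + 1)) = n ^ (2 * q + 1) * n from by ring]
      exact mul_lt_mul_of_pos_left hpn (pow_pos hnpos _)
  have hfe : e = f := by
    rw [← (he.range_inj hfmono), hrange]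
    ext x
    constructor
    · rintro ((⟨i, rfl⟩ | ⟨i, rfl⟩) | ⟨i, rfl⟩)
      · exact ⟨3 * i, hf0 i⟩
      · exact ⟨3 * i + 1, hf1 i⟩
      · exact ⟨3 * i + 2, hf2 i⟩
    · rintro ⟨j, rfl⟩
      obtain ⟨q, r, hr, rfl⟩ : ∃ q r, r < 3 ∧ j = 3 * q + r :=
        ⟨j / 3, j % 3, Nat.mod_lt _ (by norm_num), (Nat.div_add_mod j 3).symm⟩
      interval_cases r
      · exact Or.inl (Or.inl ⟨q, by rw [Nat.add_zero]; exact (hf0 q).symm ▸ rfl⟩)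
      · exact Or.inl (Or.inr ⟨q, (hf1 q)⟩)
      · exact Or.inr ⟨q, (hf2 q)⟩
  subst hfe
  have hmval : n / p = m := by rw [hm]; exact Nat.mul_div_cancel_left m hppos
  have keyA : ∀ q : ℕ, n ^ (2 * q + 1) / n ^ (2 * q) = n := by
    intro q; rw [pow_succ, Nat.mul_div_cancel_left _ (pow_pos hnpos _)]
  have keyB : ∀ q : ℕ, n ^ (2 * q + 1) * p / n ^ (2 * q + 1) = p := by
    intro q; rw [Nat.mul_div_cancel_left _ (pow_pos hnpos _)]
  have keyC : ∀ q : ℕ, n ^ (2 * (q + 1)) / (n ^ (2 * q + 1) * p) = n / p := by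
    intro q
    rw [hmval, show n ^ (2 * (q + 1)) = n ^ (2 * q + 1) * p * m from by rw [hm]; ring,
      Nat.mul_div_cancel_left _ (Nat.mul_pos (pow_pos hnpos _) hppos)]
  refine ⟨0, fun j _ => ?_⟩
  obtain ⟨q, r, hr, rfl⟩ : ∃ q r, r < 3 ∧ j = 3 * q + r :=
    ⟨j / 3, j % 3, Nat.mod_lt _ (by norm_num), (Nat.div_add_mod j 3).symm⟩
  interval_cases r
  · have a0 : f (3 * q + 0) = n ^ (2 * q) := by rw [Nat.add_zero]; exact hf0 q
    have a1 : f (3 * q + 0 + 1) = n ^ (2 * q + 1) := by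
      rw [show 3 * q + 0 + 1 = 3 * q + 1 from by ring]; exact hf1 q
    have a2 : f (3 * q + 0 + 2) = n ^ (2 * q + 1) * p := by
      rw [show 3 * q + 0 + 2 = 3 * q + 2 from by ring]; exact hf2 q
    have a3 : f (3 * q + 0 + 3) = n ^ (2 * (q + 1)) := by
      rw [show 3 * q + 0 + 3 = 3 * (q + 1) from by ring]; exact hf0 (q + 1)
    refine ⟨?_, ?_⟩
    · rw [a0, a1]; exact pow_dvd_pow n (by omega)
    · left
      rw [show 3 * q + 0 + 1 + 1 = 3 * q + 0 + 2 from by ring,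
        show 3 * q + 0 + 2 + 1 = 3 * q + 0 + 3 from by ring, a0, a1, a2, a3,
        keyA, keyB, keyC]
  · have a0 : f (3 * q + 1) = n ^ (2 * q + 1) := hf1 q
    have a1 : f (3 * q + 1 + 1) = n ^ (2 * q + 1) * p := by
      rw [show 3 * q + 1 + 1 = 3 * q + 2 from by ring]; exact hf2 q
    have a2 : f (3 * q + 1 + 2) = n ^ (2 * (q + 1)) := by
      rw [show 3 * q + 1 + 2 = 3 * (q + 1) from by ring]; exact hf0 (q + 1)
    have a3 : f (3 * q + 1 + 3) = n ^ (2 * (q + 1) + 1) := by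
      rw [show 3 * q + 1 + 3 = 3 * (q + 1) + 1 from by ring]; exact hf1 (q + 1)
    refine ⟨?_, ?_⟩
    · rw [a0, a1]; exact Dvd.intro p rfl
    · right; left
      rw [show 3 * q + 1 + 1 + 1 = 3 * q + 1 + 2 from by ring,
        show 3 * q + 1 + 2 + 1 = 3 * q + 1 + 3 from by ring, a0, a1, a2, a3,
        keyB, keyC, keyA]
  · have a0 : f (3 * q + 2) = n ^ (2 * q + 1) * p := hf2 q
    have a1 : f (3 * q + 2 + 1) = n ^ (2 * (q + 1)) := by
      rw [show 3 * q + 2 + 1 = 3 * (q + 1) from by ring]; exact hf0 (q + 1)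
    have a2 : f (3 * q + 2 + 2) = n ^ (2 * (q + 1) + 1) := by
      rw [show 3 * q + 2 + 2 = 3 * (q + 1) + 1 from by ring]; exact hf1 (q + 1)
    have a3 : f (3 * q + 2 + 3) = n ^ (2 * (q + 1) + 1) * p := by
      rw [show 3 * q + 2 + 3 = 3 * (q + 1) + 2 from by ring]; exact hf2 (q + 1)
    refine ⟨?_, ?_⟩
    · rw [a0, a1, show n ^ (2 * (q + 1)) = n ^ (2 * q + 1) * p * m from by rw [hm]; ring]
      exact Dvd.intro m rfl
    · right; right
      rw [show 3 * q + 2 + 1 + 1 = 3 * q + 2 + 2 from by ring,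
        show 3 * q + 2 + 2 + 1 = 3 * q + 2 + 3 from by ring, a0, a1, a2, a3,
        keyC, keyA, keyB]
      exact rfl
end

section
/- Suppose two groups G_1 and G_2 act on a connected, bounded-valence, locally finite graph Γ, cocompactly and freely on the vertices, and there is a vertex v_0 with G_1·v_0 = G_2·v_0. Then there exist finite symmetric generating sets S_1 ⊆ G_1 and S_2 ⊆ G_2 (not containing the identity) such that the Cayley graphs Cay(G_1,S_1) and Cay(G_2,S_2) are isomorphic as unlabeled graphs. -/
/-- The Cayley graph of a group with respect to a set `S` (for symmetric `S`
not containing `1`, this is the usual Cayley graph). -/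
def cayleyGraph (G : Type*) [Group G] (S : Set G) : SimpleGraph G :=
  SimpleGraph.fromRel (fun x y => x⁻¹ * y ∈ S)

section Aux

variable {V : Type*} {Γ : SimpleGraph V}

variable {V : Type*} {Γ : SimpleGraph V}

lemma getVert_dist_right {a b : V} (p : Γ.Walk a b) (i : ℕ) :
    Γ.dist (p.getVert i) b ≤ p.length - i := by
  induction p generalizing i with
  | @nil c =>
    have hg : (SimpleGraph.Walk.nil : Γ.Walk c c).getVert i = c := rfl
    simp [hg]
  | cons h q ih =>
    cases i with
    | zero =>
      simpa [SimpleGraph.Walk.getVert_zero] using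
        SimpleGraph.dist_le (SimpleGraph.Walk.cons h q)
    | succ i =>
      rw [SimpleGraph.Walk.getVert_cons_succ]
      simpa using ih i

lemma getVert_dist_left (hconn : Γ.Connected) {a b : V} (p : Γ.Walk a b) (i : ℕ) :
    Γ.dist a (p.getVert i) ≤ i := by
  induction p generalizing i with
  | @nil c =>
    have hg : (SimpleGraph.Walk.nil : Γ.Walk c c).getVert i = c := rfl
    rw [hg, SimpleGraph.dist_self]
    exact Nat.zero_le _
  | @cons a c b h q ih =>
    cases i with
    | zero => simp [SimpleGraph.Walk.getVert_zero]
    | succ i =>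
      rw [SimpleGraph.Walk.getVert_cons_succ]
      calc Γ.dist a (q.getVert i)
          ≤ Γ.dist a c + Γ.dist c (q.getVert i) := hconn.dist_triangle
        _ ≤ 1 + i := by
            gcongr
            · simpa using SimpleGraph.dist_le h.toWalk
            · exact ih i
        _ = i + 1 := by omega

lemma ball_finite (hconn : Γ.Connected) (hlf : ∀ v : V, (Γ.neighborSet v).Finite)
    (v : V) : ∀ n : ℕ, {u : V | Γ.dist v u ≤ n}.Finite := by
  intro n
  induction n with
  | zero =>
    apply Set.Finite.subset (Set.finite_singleton v)
    intro u hu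
    simp only [Set.mem_setOf_eq, Nat.le_zero] at hu
    simp only [Set.mem_singleton_iff]
    exact ((hconn v u).dist_eq_zero_iff.mp hu).symm
  | succ n ih =>
    apply Set.Finite.subset (Set.Finite.union (Set.finite_singleton v)
      (Set.Finite.biUnion ih (fun w _ => hlf w)))
    intro u hu
    simp only [Set.mem_setOf_eq] at hu
    obtain ⟨p, hp⟩ := (hconn u v).exists_walk_length_eq_dist
    cases p with
    | nil => exact Or.inl rfl
    | @cons _ w _ h q =>
      refine Or.inr (Set.mem_biUnion (?_ : Γ.dist v w ≤ n) h.symm)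
      have h1 : Γ.dist w v ≤ q.length := SimpleGraph.dist_le q
      have h2 : q.length + 1 = Γ.dist u v := by simpa using hp
      have h3 : Γ.dist u v = Γ.dist v u := SimpleGraph.dist_comm
      rw [SimpleGraph.dist_comm]
      omega

lemma myDistSmulLe {G : Type*} [Group G] [MulAction G V]
    (hadj : ∀ (g : G) (u v : V), Γ.Adj u v → Γ.Adj (g • u) (g • v))
    (hconn : Γ.Connected) (g : G) (u w : V) :
    Γ.dist (g • u) (g • w) ≤ Γ.dist u w := by
  obtain ⟨p, hp⟩ := (hconn u w).exists_walk_length_eq_dist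
  have := SimpleGraph.dist_le
    (p.map ⟨fun v => g • v, fun h => hadj g _ _ h⟩)
  rwa [SimpleGraph.Walk.length_map, hp] at this

lemma myDistSmul {G : Type*} [Group G] [MulAction G V]
    (hadj : ∀ (g : G) (u v : V), Γ.Adj u v → Γ.Adj (g • u) (g • v))
    (hconn : Γ.Connected) (g : G) (u w : V) :
    Γ.dist (g • u) (g • w) = Γ.dist u w := by
  refine le_antisymm (myDistSmulLe hadj hconn g u w) ?_
  have := myDistSmulLe hadj hconn g⁻¹ (g • u) (g • w)
  simpa using this

lemma gen_aux {G : Type*} [Group G] [MulAction G V] (hconn : Γ.Connected)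
    (hadj : ∀ (g : G) (u v : V), Γ.Adj u v → Γ.Adj (g • u) (g • v))
    (hfree : ∀ (g : G) (v : V), g • v = v → g = 1)
    (v₀ : V) (R : ℕ) (hR : ∀ v : V, ∃ g : G, Γ.dist (g • v₀) v ≤ R) :
    ∀ (n : ℕ) (g : G), Γ.dist v₀ (g • v₀) ≤ n →
      g ∈ Subgroup.closure {x : G | x • v₀ ≠ v₀ ∧ Γ.dist v₀ (x • v₀) ≤ 2*R+1} := by
  have small : ∀ g : G, Γ.dist v₀ (g • v₀) ≤ 2*R+1 →
      g ∈ Subgroup.closure {x : G | x • v₀ ≠ v₀ ∧ Γ.dist v₀ (x • v₀) ≤ 2*R+1} := by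
    intro g hg
    by_cases h1 : g • v₀ = v₀
    · rw [hfree g v₀ h1]; exact Subgroup.one_mem _
    · exact Subgroup.subset_closure ⟨h1, hg⟩
  intro n
  induction n with
  | zero => intro g hg; exact small g (le_trans hg (by omega))
  | succ n ih =>
    intro g hg
    by_cases hsmall : Γ.dist v₀ (g • v₀) ≤ 2*R+1
    · exact small g hsmall
    · obtain ⟨p, hp⟩ := (hconn v₀ (g • v₀)).exists_walk_length_eq_dist
      set x := p.getVert (R+1) with hx
      obtain ⟨h, hh⟩ := hR x
      have hd1 : Γ.dist v₀ x ≤ R + 1 := getVert_dist_left hconn p (R+1)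
      have hd2 : Γ.dist x (g • v₀) ≤ Γ.dist v₀ (g • v₀) - (R+1) := by
        have := getVert_dist_right p (R+1)
        rwa [hp] at this
      have hhd : Γ.dist v₀ (h • v₀) ≤ 2*R+1 := by
        have := hconn.dist_triangle (u := v₀) (v := x) (w := h • v₀)
        have hxh : Γ.dist x (h • v₀) ≤ R := by rwa [SimpleGraph.dist_comm] at hh
        omega
      have hrest : Γ.dist v₀ ((h⁻¹ * g) • v₀) ≤ n := by
        have heq : Γ.dist v₀ ((h⁻¹ * g) • v₀) = Γ.dist (h • v₀) (g • v₀) := by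
          have := myDistSmul hadj hconn h⁻¹ (h • v₀) (g • v₀)
          rw [inv_smul_smul] at this
          rw [mul_smul, this]
        have htri := hconn.dist_triangle (u := h • v₀) (v := x) (w := g • v₀)
        omega
      have := ih (h⁻¹ * g) hrest
      have hmem := Subgroup.mul_mem _ (small h hhd) this
      rwa [mul_inv_cancel_left] at hmem

lemma cayley_adj {G : Type*} [Group G] [MulAction G V] (hconn : Γ.Connected)
    (hadj : ∀ (g : G) (u v : V), Γ.Adj u v → Γ.Adj (g • u) (g • v))
    (v₀ : V) (k : ℕ) (x y : G) :
    (cayleyGraph G {x : G | x • v₀ ≠ v₀ ∧ Γ.dist v₀ (x • v₀) ≤ k}).Adj x y ↔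
      (x • v₀ ≠ y • v₀ ∧ Γ.dist (x • v₀) (y • v₀) ≤ k) := by
  have key : ∀ a b : G, ((a⁻¹ * b) • v₀ ≠ v₀ ∧ Γ.dist v₀ ((a⁻¹ * b) • v₀) ≤ k) ↔
      (a • v₀ ≠ b • v₀ ∧ Γ.dist (a • v₀) (b • v₀) ≤ k) := by
    intro a b
    have h1 : (a⁻¹ * b) • v₀ = a⁻¹ • (b • v₀) := mul_smul _ _ _
    have h2 : Γ.dist v₀ ((a⁻¹ * b) • v₀) = Γ.dist (a • v₀) (b • v₀) := by
      rw [h1]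
      have := myDistSmul hadj hconn a v₀ (a⁻¹ • (b • v₀))
      rw [smul_inv_smul] at this
      exact this.symm
    rw [h2, h1]
    have h3 : a⁻¹ • (b • v₀) = v₀ ↔ b • v₀ = a • v₀ := inv_smul_eq_iff
    constructor
    · rintro ⟨hne, hd⟩; exact ⟨fun hh => hne (h3.mpr hh.symm), hd⟩
    · rintro ⟨hne, hd⟩; exact ⟨fun hh => hne (h3.mp hh).symm, hd⟩
  rw [cayleyGraph, SimpleGraph.fromRel_adj]
  constructor
  · rintro ⟨hne, h | h⟩
    · exact (key x y).mp h
    · have := (key y x).mp h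
      exact ⟨Ne.symm this.1, by rw [SimpleGraph.dist_comm]; exact this.2⟩
  · intro hr
    exact ⟨fun he => hr.1 (by rw [he]), Or.inl ((key x y).mpr hr)⟩


end Aux

/-- If `G₁` and `G₂` act on a connected, bounded-valence, locally finite graph,
cocompactly and freely on the vertices, with a common vertex orbit, then they
admit isomorphic Cayley graphs. -/
theorem isomorphic_cayley_graphs {V : Type*} (Γ : SimpleGraph V)
    (hconn : Γ.Connected)
    (hlf : ∀ v : V, (Γ.neighborSet v).Finite)
    (D : ℕ) (hD : ∀ v : V, (Γ.neighborSet v).ncard ≤ D)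
    (G₁ G₂ : Type*) [Group G₁] [Group G₂] [MulAction G₁ V] [MulAction G₂ V]
    (h₁adj : ∀ (g : G₁) (u v : V), Γ.Adj u v → Γ.Adj (g • u) (g • v))
    (h₂adj : ∀ (g : G₂) (u v : V), Γ.Adj u v → Γ.Adj (g • u) (g • v))
    (h₁free : ∀ (g : G₁) (v : V), g • v = v → g = 1)
    (h₂free : ∀ (g : G₂) (v : V), g • v = v → g = 1)
    (h₁cocpt : ∃ F : Finset V, ∀ v : V, ∃ g : G₁, ∃ w ∈ F, g • w = v)
    (h₂cocpt : ∃ F : Finset V, ∀ v : V, ∃ g : G₂, ∃ w ∈ F, g • w = v)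
    (v₀ : V) (horb : MulAction.orbit G₁ v₀ = MulAction.orbit G₂ v₀) :
    ∃ (S₁ : Finset G₁) (S₂ : Finset G₂),
      (1 : G₁) ∉ S₁ ∧ (1 : G₂) ∉ S₂ ∧
      (∀ s ∈ S₁, s⁻¹ ∈ S₁) ∧ (∀ s ∈ S₂, s⁻¹ ∈ S₂) ∧
      Subgroup.closure (S₁ : Set G₁) = ⊤ ∧ Subgroup.closure (S₂ : Set G₂) = ⊤ ∧
      Nonempty (cayleyGraph G₁ (S₁ : Set G₁) ≃g cayleyGraph G₂ (S₂ : Set G₂)) := by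
  classical
  obtain ⟨F₁, hF₁⟩ := h₁cocpt
  obtain ⟨F₂, hF₂⟩ := h₂cocpt
  set R : ℕ := max (F₁.sup fun w => Γ.dist w v₀) (F₂.sup fun w => Γ.dist w v₀) with hRdef
  have hR₁ : ∀ v : V, ∃ g : G₁, Γ.dist (g • v₀) v ≤ R := by
    intro v
    obtain ⟨g, w, hw, hgw⟩ := hF₁ v
    refine ⟨g, ?_⟩
    have h := myDistSmul h₁adj hconn g v₀ w
    rw [hgw] at h
    rw [h, SimpleGraph.dist_comm]
    exact le_trans (Finset.le_sup (f := fun w => Γ.dist w v₀) hw) (le_max_left _ _)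
  have hR₂ : ∀ v : V, ∃ g : G₂, Γ.dist (g • v₀) v ≤ R := by
    intro v
    obtain ⟨g, w, hw, hgw⟩ := hF₂ v
    refine ⟨g, ?_⟩
    have h := myDistSmul h₂adj hconn g v₀ w
    rw [hgw] at h
    rw [h, SimpleGraph.dist_comm]
    exact le_trans (Finset.le_sup (f := fun w => Γ.dist w v₀) hw) (le_max_right _ _)
  set T₁ : Set G₁ := {x : G₁ | x • v₀ ≠ v₀ ∧ Γ.dist v₀ (x • v₀) ≤ 2*R+1} with hT₁def
  set T₂ : Set G₂ := {x : G₂ | x • v₀ ≠ v₀ ∧ Γ.dist v₀ (x • v₀) ≤ 2*R+1} with hT₂def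
  have hinj₁ : Function.Injective (fun g : G₁ => g • v₀) := by
    intro a b hab
    simp only at hab
    have h1 : (b⁻¹ * a) • v₀ = v₀ := by rw [mul_smul, hab, inv_smul_smul]
    have h2 := h₁free _ _ h1
    rw [inv_mul_eq_one] at h2
    exact h2.symm
  have hinj₂ : Function.Injective (fun g : G₂ => g • v₀) := by
    intro a b hab
    simp only at hab
    have h1 : (b⁻¹ * a) • v₀ = v₀ := by rw [mul_smul, hab, inv_smul_smul]
    have h2 := h₂free _ _ h1
    rw [inv_mul_eq_one] at h2
    exact h2.symm
  have hT₁fin : T₁.Finite := by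
    apply Set.Finite.subset
      (Set.Finite.preimage hinj₁.injOn (ball_finite hconn hlf v₀ (2*R+1)))
    intro x hx
    exact hx.2
  have hT₂fin : T₂.Finite := by
    apply Set.Finite.subset
      (Set.Finite.preimage hinj₂.injOn (ball_finite hconn hlf v₀ (2*R+1)))
    intro x hx
    exact hx.2
  have horb1 : ∀ g : G₁, ∃ h : G₂, h • v₀ = g • v₀ := by
    intro g
    have hm : g • v₀ ∈ MulAction.orbit G₂ v₀ := by
      rw [← horb]; exact MulAction.mem_orbit v₀ g
    exact MulAction.mem_orbit_iff.mp hm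
  have horb2 : ∀ h : G₂, ∃ g : G₁, g • v₀ = h • v₀ := by
    intro h
    have hm : h • v₀ ∈ MulAction.orbit G₁ v₀ := by
      rw [horb]; exact MulAction.mem_orbit v₀ h
    exact MulAction.mem_orbit_iff.mp hm
  choose e he using horb1
  choose e' he' using horb2
  have hleft : ∀ g, e' (e g) = g := fun g => hinj₁ (by simp only; rw [he', he])
  have hright : ∀ h, e (e' h) = h := fun h => hinj₂ (by simp only; rw [he, he'])
  refine ⟨hT₁fin.toFinset, hT₂fin.toFinset, ?_, ?_, ?_, ?_, ?_, ?_, ?_⟩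
  · rw [Set.Finite.mem_toFinset]
    intro hx
    exact hx.1 (one_smul _ _)
  · rw [Set.Finite.mem_toFinset]
    intro hx
    exact hx.1 (one_smul _ _)
  · intro s hs
    rw [Set.Finite.mem_toFinset] at hs ⊢
    have hd : Γ.dist (s⁻¹ • v₀) v₀ = Γ.dist v₀ (s • v₀) := by
      have := myDistSmul h₁adj hconn s⁻¹ v₀ (s • v₀)
      rwa [inv_smul_smul] at this
    refine ⟨fun hh => hs.1 ?_, ?_⟩
    · conv_lhs => rw [← hh]
      rw [smul_inv_smul]
    · rw [SimpleGraph.dist_comm, hd]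
      exact hs.2
  · intro s hs
    rw [Set.Finite.mem_toFinset] at hs ⊢
    have hd : Γ.dist (s⁻¹ • v₀) v₀ = Γ.dist v₀ (s • v₀) := by
      have := myDistSmul h₂adj hconn s⁻¹ v₀ (s • v₀)
      rwa [inv_smul_smul] at this
    refine ⟨fun hh => hs.1 ?_, ?_⟩
    · conv_lhs => rw [← hh]
      rw [smul_inv_smul]
    · rw [SimpleGraph.dist_comm, hd]
      exact hs.2
  · rw [Set.Finite.coe_toFinset, Subgroup.eq_top_iff']
    intro g
    exact gen_aux hconn h₁adj h₁free v₀ R hR₁ (Γ.dist v₀ (g • v₀)) g le_rfl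
  · rw [Set.Finite.coe_toFinset, Subgroup.eq_top_iff']
    intro g
    exact gen_aux hconn h₂adj h₂free v₀ R hR₂ (Γ.dist v₀ (g • v₀)) g le_rfl
  · refine ⟨⟨⟨e, e', hleft, hright⟩, ?_⟩⟩
    intro x y
    have hc₁ : ((hT₁fin.toFinset : Finset G₁) : Set G₁) = T₁ := hT₁fin.coe_toFinset
    have hc₂ : ((hT₂fin.toFinset : Finset G₂) : Set G₂) = T₂ := hT₂fin.coe_toFinset
    show (cayleyGraph G₂ _).Adj (e x) (e y) ↔ (cayleyGraph G₁ _).Adj x y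
    rw [hc₁, hc₂, hT₁def, hT₂def, cayley_adj hconn h₂adj v₀ (2*R+1),
      cayley_adj hconn h₁adj v₀ (2*R+1), he, he]
end
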